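/- Let S be a set and B a bounded self-adjoint operator on l²(S) with ⟨f, B f⟩ ≥ λ⟨f, f⟩ for all f and some λ > 0 (so B is boundedly invertible). Then for every x ∈ S, inf{⟨e_x − f, B(e_x − f)⟩ : f in the linear span of {e_y : y ∈ S, y ≠ x}} = ( ⟨e_x, B^{-1} e_x⟩ )^{-1}. -/

import Mathlib

/-!
Write `e = e_x`, `g = B⁻¹ e` and `d = ⟪e, g⟫ = ⟪B g, g⟫ > 0`. The vector `w = g / d` satisfies
`⟪e, w⟫ = 1` and `B w = e / d`, so `B w` is orthogonal to the hyperplane `eᗮ`. Hence every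
`u = e - f` with `f ⊥ e` satisfies `⟪u, B u⟫ = ⟪u - w, B (u - w)⟫ + 1 / d ≥ 1 / d`, with equality
at `u = w`. The value `1 / d` is the infimum over `f ∈ span {e_y : y ≠ x}` because this span is
dense in `eᗮ`. Invertibility of `B` is the self-adjoint case of Lax–Milgram: coercivity makes
`B` bounded below, so it is injective with closed range, and `(range B)ᗮ = ker B = 0`.
-/

/-- The standard basis vector `e_x` of `l²(S)`. -/
noncomputable def evec {S : Type*} [DecidableEq S] (x : S) : lp (fun _ : S => ℂ) 2 :=
  lp.single 2 x 1

open RCLike Submodule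
open scoped InnerProductSpace

namespace ContinuousLinearMap

variable {𝕜 E : Type*} [RCLike 𝕜] [NormedAddCommGroup E] [InnerProductSpace 𝕜 E]
  {B : E →L[𝕜] E} {lam : ℝ}

theorem mul_norm_le_norm_apply_of_coercive (hcoer : ∀ v, lam * ‖v‖ ^ 2 ≤ re ⟪v, B v⟫_𝕜)
    (v : E) : lam * ‖v‖ ≤ ‖B v‖ := by
  rcases (norm_nonneg v).eq_or_lt with hv | hv
  · simp [← hv]
  · have hcs : re ⟪v, B v⟫_𝕜 ≤ ‖v‖ * ‖B v‖ := re_inner_le_norm v (B v)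
    nlinarith [hcoer v]

theorem antilipschitz_of_coercive (hlam : 0 < lam)
    (hcoer : ∀ v, lam * ‖v‖ ^ 2 ≤ re ⟪v, B v⟫_𝕜) : AntilipschitzWith (lam⁻¹).toNNReal B :=
  B.antilipschitz_of_bound fun v => by
    rw [Real.coe_toNNReal _ (inv_nonneg.mpr hlam.le), le_inv_mul_iff₀ hlam]
    exact mul_norm_le_norm_apply_of_coercive hcoer v

theorem range_eq_top_of_coercive [CompleteSpace E] (hB : (B : E →ₗ[𝕜] E).IsSymmetric)
    (hlam : 0 < lam) (hcoer : ∀ v, lam * ‖v‖ ^ 2 ≤ re ⟪v, B v⟫_𝕜) : B.range = ⊤ := by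
  have hanti := antilipschitz_of_coercive hlam hcoer
  have hclosed : IsClosed (B.range : Set E) := hanti.isClosed_range B.uniformContinuous
  have : CompleteSpace B.range := hclosed.completeSpace_coe
  rw [← orthogonal_eq_bot_iff]
  exact hB.orthogonal_range.trans (LinearMap.ker_eq_bot.mpr hanti.injective)

theorem exists_inverse_of_coercive [CompleteSpace E] (hB : (B : E →ₗ[𝕜] E).IsSymmetric)
    (hlam : 0 < lam) (hcoer : ∀ v, lam * ‖v‖ ^ 2 ≤ re ⟪v, B v⟫_𝕜) :
    ∃ Binv : E →L[𝕜] E, (∀ f, B (Binv f) = f) ∧ ∀ f, Binv (B f) = f := by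
  let eB := ContinuousLinearEquiv.ofBijective B
    (LinearMap.ker_eq_bot.mpr (antilipschitz_of_coercive hlam hcoer).injective)
    (range_eq_top_of_coercive hB hlam hcoer)
  exact ⟨eB.symm, eB.apply_symm_apply, eB.symm_apply_apply⟩

end ContinuousLinearMap

section Variational

variable {𝕜 E : Type*} [RCLike 𝕜] [NormedAddCommGroup E] [InnerProductSpace 𝕜 E]
  {B : E →L[𝕜] E} {lam : ℝ}

/-- Pythagoras for the form `⟪u, B u⟫` along the hyperplanes `⟪e, ·⟫ = const`, when `B w ∥ e`. -/
theorem inner_apply_self_eq_add_of_apply_eq_smul (hB : (B : E →ₗ[𝕜] E).IsSymmetric)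
    {e u w : E} {c : 𝕜} (hw : B w = c • e) (hu : ⟪e, u⟫_𝕜 = ⟪e, w⟫_𝕜) :
    ⟪u, B u⟫_𝕜 = ⟪u - w, B (u - w)⟫_𝕜 + ⟪w, B w⟫_𝕜 := by
  have horth : ⟪e, u - w⟫_𝕜 = 0 := by rw [inner_sub_right, hu, sub_self]
  have h₁ : ⟪u - w, B w⟫_𝕜 = 0 := by
    rw [hw, inner_smul_right, ← inner_conj_symm, horth, map_zero, mul_zero]
  have h₂ : ⟪w, B (u - w)⟫_𝕜 = 0 := by
    rw [← hB.apply_clm, hw, inner_smul_left, horth, mul_zero]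
  calc ⟪u, B u⟫_𝕜 = ⟪(u - w) + w, B ((u - w) + w)⟫_𝕜 := by rw [sub_add_cancel]
    _ = ⟪u - w, B (u - w)⟫_𝕜 + ⟪u - w, B w⟫_𝕜 + (⟪w, B (u - w)⟫_𝕜 + ⟪w, B w⟫_𝕜) := by
        rw [map_add, inner_add_left, inner_add_right, inner_add_right]
    _ = ⟪u - w, B (u - w)⟫_𝕜 + ⟪w, B w⟫_𝕜 := by rw [h₁, h₂]; ring

theorem ofReal_re_inner_eq_of_apply_eq (hB : (B : E →ₗ[𝕜] E).IsSymmetric) {e g : E}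
    (hg : B g = e) : (re ⟪e, g⟫_𝕜 : 𝕜) = ⟪e, g⟫_𝕜 := by
  rw [← hg, ← B.reApplyInnerSelf_apply, hB.coe_reApplyInnerSelf_apply]

theorem isGLB_re_inner_sub_apply_sub (hB : (B : E →ₗ[𝕜] E).IsSymmetric) (hlam : 0 < lam)
    (hcoer : ∀ v, lam * ‖v‖ ^ 2 ≤ re ⟪v, B v⟫_𝕜) {e g : E} (he : ⟪e, e⟫_𝕜 = 1)
    (hg : B g = e) {V : Submodule 𝕜 E} (hV : V.topologicalClosure = (𝕜 ∙ e)ᗮ) :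
    IsGLB ((fun f => re ⟪e - f, B (e - f)⟫_𝕜) '' V) (re ⟪e, g⟫_𝕜)⁻¹ := by
  set d := ⟪e, g⟫_𝕜 with hd
  have hd_real : (re d : 𝕜) = d := ofReal_re_inner_eq_of_apply_eq hB hg
  have hg0 : g ≠ 0 := by rintro rfl; simp [← hg] at he
  have hd_pos : 0 < re d := by
    have : re d = re ⟪g, B g⟫_𝕜 := by rw [hd, ← hg, ← inner_conj_symm, conj_re]
    rw [this]
    exact lt_of_lt_of_le (by positivity) (hcoer g)
  have hd0 : d ≠ 0 := fun h => by simp [h] at hd_pos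
  set w := d⁻¹ • g
  have hw : B w = d⁻¹ • e := by rw [map_smul, hg]
  have hew : ⟪e, w⟫_𝕜 = 1 := by rw [inner_smul_right, ← hd, inv_mul_cancel₀ hd0]
  have hww : re ⟪w, B w⟫_𝕜 = (re d)⁻¹ := by
    rw [hw, inner_smul_right, ← inner_conj_symm, hew, map_one, mul_one, ← hd_real,
      ← ofReal_inv, ofReal_re, ofReal_re]
  have hVe : ∀ f ∈ V, ⟪e, f⟫_𝕜 = 0 := fun f hf =>
    mem_orthogonal_singleton_iff_inner_right.mp (hV ▸ V.le_topologicalClosure hf)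
  rw [← hww]
  refine isGLB_of_mem_closure ?_ ?_
  · rintro _ ⟨f, hf, rfl⟩
    have hu : ⟪e, e - f⟫_𝕜 = ⟪e, w⟫_𝕜 := by rw [inner_sub_right, hVe f hf, he, hew, sub_zero]
    have hnonneg : 0 ≤ re ⟪e - f - w, B (e - f - w)⟫_𝕜 :=
      le_trans (by positivity) (hcoer _)
    simp only [inner_apply_self_eq_add_of_apply_eq_smul hB hw hu, map_add]
    linarith
  · have hmem : e - w ∈ closure (V : Set E) := by
      rw [← V.topologicalClosure_coe, hV, SetLike.mem_coe,
        mem_orthogonal_singleton_iff_inner_right, inner_sub_right, he, hew, sub_self]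
    have hcont : Continuous fun f => re ⟪e - f, B (e - f)⟫_𝕜 := by fun_prop
    simpa only [sub_sub_cancel] using mem_closure_image hcont.continuousAt hmem

end Variational

section StandardBasis

variable {S : Type*} [DecidableEq S]

theorem inner_evec_left (x : S) (v : lp (fun _ : S => ℂ) 2) : ⟪evec x, v⟫_ℂ = v x := by
  simp [evec, lp.inner_single_left]

theorem inner_evec_self (x : S) : ⟪evec x, evec x⟫_ℂ = 1 := by
  simp [evec]

theorem lp_single_eq_smul_evec (v : lp (fun _ : S => ℂ) 2) (i : S) :
    lp.single 2 i (v i) = v i • evec i := by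
  rw [evec, ← lp.single_smul, smul_eq_mul, mul_one]

theorem topologicalClosure_span_evec_ne (x : S) :
    (span ℂ (evec '' {y : S | y ≠ x})).topologicalClosure = (ℂ ∙ evec x)ᗮ := by
  apply le_antisymm
  · refine topologicalClosure_minimal _ (span_le.mpr ?_) (isClosed_orthogonal _)
    rintro _ ⟨y, hy, rfl⟩
    rw [SetLike.mem_coe, mem_orthogonal_singleton_iff_inner_right, inner_evec_left, evec,
      lp.single_apply_ne 2 y 1 (Ne.symm hy)]
  · intro v hv
    have hvx : v x = 0 := by
      rwa [mem_orthogonal_singleton_iff_inner_right, inner_evec_left] at hv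
    have hpartial (s : Finset S) :
        ∑ i ∈ s, lp.single 2 i (v i) ∈ span ℂ (evec '' {y : S | y ≠ x}) := by
      refine sum_mem fun i _ => ?_
      rw [lp_single_eq_smul_evec]
      by_cases hi : i = x
      · rw [hi, hvx, zero_smul]
        exact zero_mem _
      · exact smul_mem _ _ (subset_span ⟨i, hi, rfl⟩)
    rw [← SetLike.mem_coe, topologicalClosure_coe]
    exact mem_closure_of_tendsto (lp.hasSum_single (by norm_num) v) (.of_forall hpartial)

end StandardBasis

/-- **The variational infimum as the reciprocal of a diagonal entry of the inverse.**
Let `B` be a bounded self-adjoint operator on `l²(S)` with `⟨f, Bf⟩ ≥ λ⟨f,f⟩` for some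
`λ > 0` (so `B` is boundedly invertible).  Then for every `x ∈ S`,
`inf {⟨e_x − f, B(e_x − f)⟩ : f ∈ span {e_y : y ≠ x}} = (⟨e_x, B⁻¹ e_x⟩)⁻¹`. -/
theorem statement11 {S : Type*} [DecidableEq S]
    (B : lp (fun _ : S => ℂ) 2 →L[ℂ] lp (fun _ : S => ℂ) 2)
    (hsa : ∀ f g : lp (fun _ : S => ℂ) 2, (inner ℂ (B f) g : ℂ) = inner ℂ f (B g))
    (lam : ℝ) (hlam : 0 < lam)
    (hcoer : ∀ f : lp (fun _ : S => ℂ) 2, lam * ‖f‖ ^ 2 ≤ (inner ℂ f (B f) : ℂ).re)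
    (x : S) :
    ∃ Binv : lp (fun _ : S => ℂ) 2 →L[ℂ] lp (fun _ : S => ℂ) 2,
      (∀ f, B (Binv f) = f) ∧ (∀ f, Binv (B f) = f) ∧
      ((sInf ((fun f => (inner ℂ (evec x - f) (B (evec x - f)) : ℂ).re) ''
          (Submodule.span ℂ (evec '' {y : S | y ≠ x}) :
            Set (lp (fun _ : S => ℂ) 2))) : ℝ) : ℂ) =
        (inner ℂ (evec x) (Binv (evec x)) : ℂ)⁻¹ := by
  obtain ⟨Binv, hBBinv, hBinvB⟩ := B.exists_inverse_of_coercive hsa hlam hcoer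
  refine ⟨Binv, hBBinv, hBinvB, ?_⟩
  have hglb := isGLB_re_inner_sub_apply_sub hsa hlam hcoer (inner_evec_self x)
    (hBBinv (evec x)) (topologicalClosure_span_evec_ne x)
  simp only [re_to_complex] at hglb
  rw [hglb.csInf_eq ⟨_, 0, zero_mem _, rfl⟩, Complex.ofReal_inv]
  congr 1
  exact ofReal_re_inner_eq_of_apply_eq hsa (hBBinv (evec x))
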